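/- The map φ(x) = (x, 1 − x, 1 − 1/x) is a bijection from ℂ ∖ {0,1} onto 𝔛_CR = {(x₁,x₂,x₃) ∈ ℂ³ : x₁,x₂,x₃ ≠ 0, x₁ + x₂ = 1, 1/x₂ + 1/x₃ = 1, x₃ + 1/x₁ = 1}. Moreover every point of 𝔛_CR satisfies the defining equations of 𝔛 (so 𝔛_CR ⊆ 𝔛), and φ(x) lies in 𝔛_ℝ if and only if x ∈ ℝ ∖ {0,1}. (Hence the CR-singular set 𝔛_CR is a 1-dimensional complex manifold biholomorphic to ℂ ∖ {0,1}, containing 𝔛_ℝ.) -/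

import Mathlib

noncomputable section

open Complex

/-- Falbel's cross-ratio variety 𝔛 as a subset of ℂ³. -/
def Xvar : Set (ℂ × ℂ × ℂ) :=
  {x | x.1 ≠ 0 ∧ x.2.1 ≠ 0 ∧ x.2.2 ≠ 0 ∧
    ‖x.2.1‖ = ‖x.1‖ * ‖x.2.2‖ ∧
    2 * (‖x.1‖) ^ 2 * x.2.2.re =
      (‖x.1‖) ^ 2 + (‖x.2.1‖) ^ 2
        - 2 * x.1.re - 2 * x.2.1.re + 1}

/-- The CR-singular set 𝔛_CR. -/
def XCR : Set (ℂ × ℂ × ℂ) :=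
  {x | x.1 ≠ 0 ∧ x.2.1 ≠ 0 ∧ x.2.2 ≠ 0 ∧
    x.1 + x.2.1 = 1 ∧ 1 / x.2.1 + 1 / x.2.2 = 1 ∧ x.2.2 + 1 / x.1 = 1}

/-- The real singular set 𝔛_ℝ. -/
def XR : Set (ℂ × ℂ × ℂ) :=
  {x | x ∈ Xvar ∧ x.1.im = 0 ∧ x.2.1.im = 0 ∧ x.2.2.im = 0 ∧
    x.1 + x.2.1 = 1 ∧ 1 / x.2.1 + 1 / x.2.2 = 1 ∧ x.2.2 + 1 / x.1 = 1}

/-- The parametrisation of the CR-singular set. -/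
def phi (x : ℂ) : ℂ × ℂ × ℂ := (x, 1 - x, 1 - 1 / x)

/-! The three equations of 𝔛_CR say that `x₂ = 1 - x₁` and `x₃ = 1 - 1/x₁`, the middle one being
then automatic, so 𝔛_CR is the graph of `φ` over `ℂ ∖ {0,1}`. On this graph the two equations
of 𝔛 are identities: `x₁ x₃ = x₁ - 1 = -x₂` gives the norm equation, and `|x₁|² Re(1/x₁) = Re x₁`
turns the real equation into `2|x₁|² - 2 Re x₁` on both sides. -/

lemma phi_injective : Function.Injective phi :=
  fun _ _ h => congrArg Prod.fst h

lemma one_sub_one_div_ne_zero {x : ℂ} (hx1 : x ≠ 1) : 1 - 1 / x ≠ 0 := by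
  rw [sub_ne_zero, ne_comm, one_div, inv_ne_one]
  exact hx1

lemma phi_mem_XCR {x : ℂ} (hx0 : x ≠ 0) (hx1 : x ≠ 1) : phi x ∈ XCR := by
  refine ⟨hx0, sub_ne_zero.mpr hx1.symm, one_sub_one_div_ne_zero hx1,
    add_sub_cancel x 1, ?_, sub_add_cancel 1 (1 / x)⟩
  show 1 / (1 - x) + 1 / (1 - 1 / x) = 1
  field_simp
  ring

lemma eq_phi_of_mem_XCR {p : ℂ × ℂ × ℂ} (hp : p ∈ XCR) : p.1 ≠ 1 ∧ phi p.1 = p := by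
  obtain ⟨-, h2, -, e1, -, e3⟩ := hp
  have hp2 : p.2.1 = 1 - p.1 := by linear_combination e1
  have hp3 : p.2.2 = 1 - 1 / p.1 := by linear_combination e3
  refine ⟨fun h => h2 (by rw [hp2, h, sub_self]), ?_⟩
  rw [phi, ← hp2, ← hp3]

lemma image_phi : phi '' {x : ℂ | x ≠ 0 ∧ x ≠ 1} = XCR := by
  refine Set.Subset.antisymm (Set.image_subset_iff.2 fun x hx => phi_mem_XCR hx.1 hx.2)
    fun p hp => ?_
  obtain ⟨hp1, hphi⟩ := eq_phi_of_mem_XCR hp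
  exact ⟨p.1, ⟨hp.1, hp1⟩, hphi⟩

lemma Complex.sq_norm_mul_inv_re (x : ℂ) : ‖x‖ ^ 2 * x⁻¹.re = x.re := by
  rcases eq_or_ne x 0 with rfl | hx
  · simp
  have : normSq x ≠ 0 := (normSq_pos.mpr hx).ne'
  rw [inv_re, Complex.sq_norm]
  field_simp

lemma phi_mem_Xvar {x : ℂ} (hx0 : x ≠ 0) (hx1 : x ≠ 1) : phi x ∈ Xvar := by
  obtain ⟨h1, h2, h3, -⟩ := phi_mem_XCR hx0 hx1
  refine ⟨h1, h2, h3, ?_, ?_⟩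
  · show ‖1 - x‖ = ‖x‖ * ‖1 - 1 / x‖
    rw [← norm_mul, ← norm_neg]
    congr 1
    field_simp
    ring
  · show 2 * ‖x‖ ^ 2 * (1 - 1 / x).re = ‖x‖ ^ 2 + ‖1 - x‖ ^ 2 - 2 * x.re - 2 * (1 - x).re + 1
    have hre := Complex.sq_norm_mul_inv_re x
    simp only [one_div, sub_re, one_re, Complex.sq_norm, normSq_apply, sub_im, one_im] at hre ⊢
    linear_combination (-2) * hre

/-- `φ(x) = (x, 1−x, 1−1/x)` is a bijection of `ℂ ∖ {0,1}` onto 𝔛_CR;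
moreover 𝔛_CR ⊆ 𝔛, and `φ(x) ∈ 𝔛_ℝ` iff `x` is real. -/
theorem XCR_parametrisation :
    Set.BijOn phi {x : ℂ | x ≠ 0 ∧ x ≠ 1} XCR ∧
    XCR ⊆ Xvar ∧
    (∀ x : ℂ, x ≠ 0 → x ≠ 1 → (phi x ∈ XR ↔ x.im = 0)) := by
  refine ⟨image_phi ▸ phi_injective.injOn.bijOn_image, ?_, fun x hx0 hx1 => ⟨fun h => h.2.1, ?_⟩⟩
  · rw [← image_phi]
    exact Set.image_subset_iff.2 fun x hx => phi_mem_Xvar hx.1 hx.2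
  · intro him
    obtain ⟨-, -, -, e1, e2, e3⟩ := phi_mem_XCR hx0 hx1
    refine ⟨phi_mem_Xvar hx0 hx1, him, ?_, ?_, e1, e2, e3⟩ <;> simp [phi, him]
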